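/- Let A be a finite-dimensional algebra over an algebraically closed field K such that λ ↦ λ' is an involution on Λ₀, and suppose there exists a symmetrizing form τ on B = End_A(⊕_{λ∈Λ₀} P^λ) with τ(θ_λ) = 1 for all λ ∈ Λ₀. Then for any nonzero f ∈ Hom_A(P^λ, P^μ) with λ, μ ∈ Λ₀, there exists g ∈ Hom_A(P^μ, P^λ) such that f∘g = θ_μ and g∘f = θ_λ. -/

import Mathlib

/-- The socle of a module: the largest semisimple submodule. -/
def Socle (A M : Type) [Ring A] [AddCommGroup M] [Module A M] : Submodule A M :=
  ⨆ (p : Submodule A M) (_ : IsSimpleModule A ↥p), p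

/-- The radical of a module: the intersection of all maximal submodules. -/
def Rad (A M : Type) [Ring A] [AddCommGroup M] [Module A M] : Submodule A M :=
  sInf {p : Submodule A M | IsCoatom p}

/-- The canonical embedding of `Hom_A(P^λ, P^μ)` into `End_A(⊕ P^λ)`. -/
noncomputable def emb (A : Type) [Ring A] (ι : Type) [DecidableEq ι]
    (P : ι → Type) [∀ i, AddCommGroup (P i)] [∀ i, Module A (P i)]
    (l m : ι) (f : P l →ₗ[A] P m) : Module.End A (DirectSum ι P) :=
  (DirectSum.lof A ι P m).comp (f.comp (DirectSum.component A ι P l))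

/-!
Consider the `K`-linear map `Φ g = (f ∘ g, g ∘ f)`. Since `τ` pairs `Hom(P^μ, P^λ)` perfectly
with `Hom(P^λ, P^μ)`, the pair `(θ_μ, θ_λ)` lies in the range of `Φ` as soon as it is
`τ`-orthogonal to every `(y, x)` orthogonal to that range, i.e. (by nondegeneracy) to every
`(y, x)` with `y ∘ f + f ∘ x = 0`. Each `P^λ` has a unique maximal submodule, so `End(P^λ)` is
local: `y = c + (nilpotent)` and `x = c' + (nilpotent)` with `c, c' ∈ K`, and `θ` kills the
nilpotent parts, whence `τ(θ_μ y) + τ(θ_λ x) = c + c'`. If `c + c' ≠ 0`, then `f` intertwines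
the nilpotent `y - c` with the unit `-(c + c') - (x - c')`, which forces `f = 0`.
-/

section LocalModule

variable {A M N : Type} [Ring A] [AddCommGroup M] [Module A M] [AddCommGroup N] [Module A N]

theorem le_rad_of_ne_top [IsCoatomic (Submodule A M)] (hR : IsCoatom (Rad A M))
    {p : Submodule A M} (hp : p ≠ ⊤) : p ≤ Rad A M := by
  obtain ⟨m, hm, hpm⟩ := (eq_top_or_exists_le_coatom p).resolve_left hp
  rwa [(hR.le_iff.mp (sInf_le hm)).resolve_left hm.1] at hpm

theorem rad_le_ker (θ : M →ₗ[A] N) [IsSimpleModule A (LinearMap.range θ)] :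
    Rad A M ≤ LinearMap.ker θ :=
  sInf_le <| isSimpleModule_iff_isCoatom.mp (IsSimpleModule.congr θ.quotKerEquivRange)

theorem isCoatom_rad_of_surjective {L : Type} [AddCommGroup L] [Module A L]
    [IsSimpleModule A L] {π : M →ₗ[A] L} (hπ : Function.Surjective π)
    (hker : LinearMap.ker π = Rad A M) : IsCoatom (Rad A M) := by
  rw [← hker, ← isSimpleModule_iff_isCoatom]
  exact IsSimpleModule.congr (π.quotKerEquivOfSurjective hπ)

theorem comp_eq_zero_of_not_surjective [IsCoatomic (Submodule A M)] (hR : IsCoatom (Rad A M))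
    (θ : M →ₗ[A] N) [IsSimpleModule A (LinearMap.range θ)] {j : Module.End A M}
    (hj : ¬ Function.Surjective j) : θ ∘ₗ j = 0 := by
  ext x
  exact rad_le_ker θ <| le_rad_of_ne_top hR (mt LinearMap.range_eq_top.mp hj) ⟨x, rfl⟩

theorem isNilpotent_of_not_surjective [IsNoetherian A M] [IsArtinian A M]
    (hR : IsCoatom (Rad A M)) {a : Module.End A M} (ha : ¬ Function.Surjective a) :
    IsNilpotent a := by
  obtain ⟨n, hn1, hn⟩ := ((Filter.eventually_ge_atTop 1).and
    a.eventually_codisjoint_ker_pow_range_pow).exists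
  refine ⟨n, by_contra fun hne => hR.1 (top_le_iff.mp ?_)⟩
  have hker := le_rad_of_ne_top hR (mt LinearMap.ker_eq_top.mp hne)
  have hrange : LinearMap.range (a ^ n) ≤ Rad A M := by
    obtain ⟨k, rfl⟩ := Nat.exists_eq_add_of_le' hn1
    rw [pow_succ', Module.End.mul_eq_comp]
    exact (LinearMap.range_comp_le_range _ _).trans
      (le_rad_of_ne_top hR (mt LinearMap.range_eq_top.mp ha))
  exact hn.eq_top ▸ sup_le hker hrange

theorem eq_zero_of_comp_eq_comp_of_isUnit {a : Module.End A N} {u : Module.End A M}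
    (ha : IsNilpotent a) (hu : IsUnit u) {f : M →ₗ[A] N} (h : a ∘ₗ f = f ∘ₗ u) : f = 0 := by
  obtain ⟨n, hn⟩ := ha
  have hpow : ∀ k : ℕ, (a ^ k) ∘ₗ f = f ∘ₗ u ^ k := by
    intro k
    induction k with
    | zero => rfl
    | succ k ih =>
      rw [pow_succ', pow_succ', Module.End.mul_eq_comp, Module.End.mul_eq_comp,
        LinearMap.comp_assoc, ih, ← LinearMap.comp_assoc, h, LinearMap.comp_assoc]
  ext x
  obtain ⟨y, rfl⟩ := ((Module.End.isUnit_iff _).mp (hu.pow n)).surjective x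
  simpa [hn] using (LinearMap.congr_fun (hpow n) y).symm

variable (K : Type) [Field K] [Algebra K A] [Module K M] [IsScalarTower K A M]
  [SMulCommClass A K M] [Module K N] [IsScalarTower K A N] [SMulCommClass A K N]

theorem exists_not_surjective_sub_algebraMap [IsAlgClosed K] [FiniteDimensional K M]
    [Nontrivial M] (y : Module.End A M) :
    ∃ c : K, ¬ Function.Surjective (y - algebraMap K (Module.End A M) c) := by
  obtain ⟨c, hc⟩ := Module.End.exists_eigenvalue (y.restrictScalars K)
  obtain ⟨v, hv⟩ := hc.exists_hasEigenvector
  refine ⟨c, fun hsurj => hv.2 ?_⟩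
  have hinj : Function.Injective ((y - algebraMap K (Module.End A M) c).restrictScalars K) :=
    LinearMap.injective_iff_surjective.mpr hsurj
  refine hinj ?_
  simpa [sub_eq_zero] using hv.apply_eq_smul

theorem add_eq_zero_of_comp_add_comp_eq_zero {f : M →ₗ[A] N} (hf : f ≠ 0)
    {y : Module.End A N} {x : Module.End A M} (hyx : y ∘ₗ f + f ∘ₗ x = 0) {cy cx : K}
    (hy : IsNilpotent (y - algebraMap K (Module.End A N) cy))
    (hx : IsNilpotent (x - algebraMap K (Module.End A M) cx)) : cy + cx = 0 := by
  by_contra hc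
  have hunit : IsUnit (-(x - algebraMap K (Module.End A M) cx) +
      algebraMap K (Module.End A M) (-(cy + cx))) :=
    hx.neg.isUnit_add_right_of_commute
      ((IsUnit.mk0 _ (neg_ne_zero.mpr hc)).map (algebraMap K (Module.End A M)))
      (Algebra.commutes _ _).symm
  refine hf (eq_zero_of_comp_eq_comp_of_isUnit hy hunit ?_)
  ext v
  have hv := LinearMap.congr_fun hyx v
  simp only [LinearMap.comp_apply, LinearMap.add_apply, LinearMap.sub_apply,
    Module.algebraMap_end_apply, LinearMap.neg_apply, LinearMap.zero_apply, map_add, map_neg,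
    map_sub, LinearMap.map_smul_of_tower] at hv ⊢
  linear_combination (norm := module) hv

theorem comp_eq_smul_of_not_surjective [IsCoatomic (Submodule A M)] (hR : IsCoatom (Rad A M))
    (θ : Module.End A M) [IsSimpleModule A (LinearMap.range θ)] {y : Module.End A M} {c : K}
    (hy : ¬ Function.Surjective (y - algebraMap K (Module.End A M) c)) : θ ∘ₗ y = c • θ := by
  have h := comp_eq_zero_of_not_surjective hR θ hy
  rw [LinearMap.comp_sub, sub_eq_zero] at h
  rw [h]
  ext
  simp [LinearMap.map_smul_of_tower]

theorem exists_isNilpotent_sub_algebraMap_and_comp_eq_smul [IsAlgClosed K] [FiniteDimensional K M]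
    (hR : IsCoatom (Rad A M)) (θ : Module.End A M) [IsSimpleModule A (LinearMap.range θ)]
    (y : Module.End A M) :
    ∃ c : K, IsNilpotent (y - algebraMap K (Module.End A M) c) ∧ θ ∘ₗ y = c • θ := by
  have : Nontrivial M := (Submodule.nontrivial_iff A).mp (nontrivial_of_ne _ _ hR.1)
  have : IsNoetherian A M := isNoetherian_of_tower K inferInstance
  have : IsArtinian A M := isArtinian_of_tower K inferInstance
  obtain ⟨c, hc⟩ := exists_not_surjective_sub_algebraMap K y
  exact ⟨c, isNilpotent_of_not_surjective hR hc, comp_eq_smul_of_not_surjective K hR θ hc⟩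

theorem exists_comp_eq_smul_of_comp_add_comp_eq_zero [IsAlgClosed K] [FiniteDimensional K M]
    [FiniteDimensional K N] (hRM : IsCoatom (Rad A M)) (hRN : IsCoatom (Rad A N))
    (θM : Module.End A M) [IsSimpleModule A (LinearMap.range θM)]
    (θN : Module.End A N) [IsSimpleModule A (LinearMap.range θN)]
    {f : M →ₗ[A] N} (hf : f ≠ 0) {y : Module.End A N} {x : Module.End A M}
    (hyx : y ∘ₗ f + f ∘ₗ x = 0) : ∃ c : K, θN ∘ₗ y = c • θN ∧ θM ∘ₗ x = (-c) • θM := by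
  obtain ⟨cy, hy, hθy⟩ := exists_isNilpotent_sub_algebraMap_and_comp_eq_smul K hRN θN y
  obtain ⟨cx, hx, hθx⟩ := exists_isNilpotent_sub_algebraMap_and_comp_eq_smul K hRM θM x
  refine ⟨cy, hθy, ?_⟩
  rwa [← eq_neg_of_add_eq_zero_right (add_eq_zero_of_comp_add_comp_eq_zero K hf hyx hy hx)]

end LocalModule

theorem Module.Dual.exists_comp_eq_of_ker_le {K V W : Type} [Field K] [AddCommGroup V]
    [Module K V] [AddCommGroup W] [Module K W] {Ψ : V →ₗ[K] W} {χ : Module.Dual K V}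
    (h : LinearMap.ker Ψ ≤ LinearMap.ker χ) : ∃ φ : Module.Dual K W, φ ∘ₗ Ψ = χ :=
  (LinearMap.range_dualMap_eq_dualAnnihilator_ker Ψ).ge <|
    (Submodule.mem_dualAnnihilator χ).mpr fun _ hv => h hv

section Trace

variable {A ι : Type} [Ring A] [DecidableEq ι] {P : ι → Type} [∀ i, AddCommGroup (P i)]
  [∀ i, Module A (P i)]

theorem emb_mul_emb (l m k : ι) (u : P l →ₗ[A] P m) (v : P k →ₗ[A] P l) :
    emb A ι P l m u * emb A ι P k l v = emb A ι P k m (u ∘ₗ v) := by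
  ext
  simp [emb, DirectSum.component.lof_self]

theorem emb_injective (l m : ι) : Function.Injective (emb A ι P l m) := fun u v h => by
  ext x
  simpa [emb, DirectSum.component.lof_self] using
    congr(DirectSum.component A ι P m ($h (DirectSum.lof A ι P l x)))

theorem emb_add (l m : ι) (u v : P l →ₗ[A] P m) :
    emb A ι P l m (u + v) = emb A ι P l m u + emb A ι P l m v := by
  ext
  simp [emb]

variable {K : Type} [Field K] [∀ i, Module K (P i)] [∀ i, SMulCommClass A K (P i)]
  (τ : Module.End A (DirectSum ι P) →ₗ[K] K)

theorem trace_emb_comp_comm (hsymm : ∀ x y, τ (x * y) = τ (y * x)) {a b : ι}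
    (u : P a →ₗ[A] P b) (v : P b →ₗ[A] P a) :
    τ (emb A ι P b b (u ∘ₗ v)) = τ (emb A ι P a a (v ∘ₗ u)) := by
  rw [← emb_mul_emb, ← emb_mul_emb, hsymm]

theorem exists_trace_emb_comp_ne_zero (hsymm : ∀ x y, τ (x * y) = τ (y * x))
    (hnd : ∀ x, x ≠ 0 → ∃ y, τ (x * y) ≠ 0) {a b : ι} {u : P a →ₗ[A] P b} (hu : u ≠ 0) :
    ∃ v : P b →ₗ[A] P a, τ (emb A ι P b b (u ∘ₗ v)) ≠ 0 := by
  obtain ⟨y, hy⟩ := hnd _ fun h => hu (emb_injective a b (by simpa [emb] using h))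
  -- `v` is the block of `y` from `P b` to `P a`, the only one that `τ (emb u * y)` sees.
  refine ⟨DirectSum.component A ι P a ∘ₗ y ∘ₗ DirectSum.lof A ι P b, ?_⟩
  have hcorner : emb A ι P b b (u ∘ₗ DirectSum.component A ι P a ∘ₗ y ∘ₗ DirectSum.lof A ι P b) =
      emb A ι P a b u * y * emb A ι P b b LinearMap.id := by
    ext
    simp [emb]
  rwa [hcorner, hsymm, ← mul_assoc, emb_mul_emb, LinearMap.id_comp]

variable [Algebra K A] [∀ i, IsScalarTower K A (P i)]

theorem emb_smul (l m : ι) (c : K) (u : P l →ₗ[A] P m) :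
    emb A ι P l m (c • u) = c • emb A ι P l m u := by
  ext
  simp [emb, LinearMap.map_smul_of_tower]

noncomputable def tracePairing (l m : ι) : (P m →ₗ[A] P l) →ₗ[K] (P l →ₗ[A] P m) →ₗ[K] K :=
  LinearMap.mk₂ K (fun g h => τ (emb A ι P l l (g ∘ₗ h)))
    (fun _ _ _ => by rw [LinearMap.add_comp, emb_add, map_add])
    (fun _ _ _ => by rw [LinearMap.smul_comp, emb_smul, map_smul])
    (fun _ _ _ => by rw [LinearMap.comp_add, emb_add, map_add])
    (fun _ _ _ => by rw [LinearMap.comp_smul, emb_smul, map_smul])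

@[simp]
theorem tracePairing_apply (l m : ι) (g : P m →ₗ[A] P l) (h : P l →ₗ[A] P m) :
    tracePairing τ l m g h = τ (emb A ι P l l (g ∘ₗ h)) := rfl

variable (hsymm : ∀ x y, τ (x * y) = τ (y * x))
include hsymm

theorem tracePairing_flip (l m : ι) : (tracePairing τ l m).flip = tracePairing τ m l := by
  ext
  exact trace_emb_comp_comm τ hsymm _ _

theorem tracePairing_injective (hnd : ∀ x, x ≠ 0 → ∃ y, τ (x * y) ≠ 0) (l m : ι) :
    Function.Injective (tracePairing τ l m) := by
  refine (injective_iff_map_eq_zero _).mpr fun g hg => by_contra fun hne => ?_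
  obtain ⟨v, hv⟩ := exists_trace_emb_comp_ne_zero τ hsymm hnd hne
  exact hv (LinearMap.congr_fun hg v)

theorem tracePairing_isPerfPair [∀ i, FiniteDimensional K (P i)]
    (hnd : ∀ x, x ≠ 0 → ∃ y, τ (x * y) ≠ 0) (l m : ι) : (tracePairing τ l m).IsPerfPair :=
  .of_injective (tracePairing_injective τ hsymm hnd l m)
    (tracePairing_flip τ hsymm l m ▸ tracePairing_injective τ hsymm hnd m l)

end Trace

theorem stmt_4_general
    (K A : Type) [Field K] [IsAlgClosed K] [Ring A] [Algebra K A]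
    (Lam : Type) [DecidableEq Lam] (L P : Lam → Type)
    [∀ l, AddCommGroup (L l)] [∀ l, Module A (L l)]
    [∀ l, AddCommGroup (P l)] [∀ l, Module A (P l)] [∀ l, Module K (P l)]
    [∀ l, IsScalarTower K A (P l)] [∀ l, SMulCommClass A K (P l)]
    [∀ l, FiniteDimensional K (P l)]
    (hsimple : ∀ l, IsSimpleModule A (L l))
    (hcover : ∀ l, ∃ π : P l →ₗ[A] L l, Function.Surjective π ∧ LinearMap.ker π = Rad A (P l))
    -- λ' = λ on Λ₀: soc(P^λ) ≅ L^λ for λ ∈ Λ₀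
    (hsoc : ∀ l, Module.Injective A (P l) → Nonempty (↥(Socle A (P l)) ≃ₗ[A] L l))
    -- the fixed maps θ_λ : P^λ → P^λ with image soc(P^λ)
    (θ : ∀ s : {l : Lam // Module.Injective A (P l)}, P s.1 →ₗ[A] P s.1)
    (hθ : ∀ s, LinearMap.range (θ s) = Socle A (P s.1))
    -- a symmetrizing form τ on B with τ(θ_λ) = 1 for all λ ∈ Λ₀
    (τ : Module.End A (DirectSum {l : Lam // Module.Injective A (P l)} (fun s => P s.1)) →ₗ[K] K)
    (hsymm : ∀ x y, τ (x * y) = τ (y * x))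
    (hnd : ∀ x, x ≠ 0 → ∃ y, τ (x * y) ≠ 0)
    (hτθ : ∀ s, τ (emb A {l : Lam // Module.Injective A (P l)} (fun s => P s.1) s s (θ s)) = 1)
    (s t : {l : Lam // Module.Injective A (P l)})
    (f : P s.1 →ₗ[A] P t.1) (hf : f ≠ 0) :
    ∃ g : P t.1 →ₗ[A] P s.1, f.comp g = θ t ∧ g.comp f = θ s := by
  have hR : ∀ l, IsCoatom (Rad A (P l)) := fun l =>
    (hcover l).elim fun _ hπ => isCoatom_rad_of_surjective hπ.1 hπ.2
  have hθsimple : ∀ r, IsSimpleModule A (LinearMap.range (θ r)) := fun r =>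
    IsSimpleModule.congr ((LinearEquiv.ofEq _ _ (hθ r)).trans (hsoc r.1 r.2).some)
  let Ψ : Module.End A (P t.1) × Module.End A (P s.1) →ₗ[K] (P s.1 →ₗ[A] P t.1) :=
    (LinearMap.lcomp K (P t.1) f).coprod (LinearMap.compRight K f)
  let χ : Module.Dual K (Module.End A (P t.1) × Module.End A (P s.1)) :=
    (tracePairing τ t t (θ t)).coprod (tracePairing τ s s (θ s))
  have hker : LinearMap.ker Ψ ≤ LinearMap.ker χ := by
    rintro ⟨y, x⟩ hyx
    obtain ⟨c, hy, hx⟩ := exists_comp_eq_smul_of_comp_add_comp_eq_zero K (hR s.1) (hR t.1)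
      (θ s) (θ t) hf (y := y) (x := x) hyx
    simp only [χ, LinearMap.mem_ker, LinearMap.coprod_apply, tracePairing_apply, hy, hx,
      emb_smul, map_smul, hτθ, smul_eq_mul, mul_one, add_neg_cancel]
  obtain ⟨φ, hφ⟩ := Module.Dual.exists_comp_eq_of_ker_le hker
  obtain ⟨g, rfl⟩ := (tracePairing_isPerfPair τ hsymm hnd s t).bijective_left.surjective φ
  refine ⟨g, tracePairing_injective τ hsymm hnd t t (LinearMap.ext fun y => ?_),
    tracePairing_injective τ hsymm hnd s s (LinearMap.ext fun x => ?_)⟩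
  · have h := LinearMap.congr_fun hφ (y, 0)
    simp only [LinearMap.comp_apply, Ψ, χ, LinearMap.coprod_apply, map_zero, add_zero] at h
    rw [← h, tracePairing_apply, tracePairing_apply, LinearMap.comp_assoc,
      trace_emb_comp_comm τ hsymm, LinearMap.comp_assoc]
    rfl
  · have h := LinearMap.congr_fun hφ (0, x)
    simp only [LinearMap.comp_apply, Ψ, χ, LinearMap.coprod_apply, map_zero, zero_add] at h
    rw [← h, tracePairing_apply, tracePairing_apply, LinearMap.comp_assoc]
    rfl

/-- Suppose there is a symmetrizing form `τ` on `B = End_A(⊕_{λ∈Λ₀} P^λ)` with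
`τ(θ_λ) = 1` for all `λ ∈ Λ₀` (here `λ' = λ`, so `θ_λ : P^λ → P^λ` has image `soc(P^λ)`).
Then for any nonzero `f ∈ Hom_A(P^λ, P^μ)` with `λ, μ ∈ Λ₀` there exists
`g ∈ Hom_A(P^μ, P^λ)` with `f ∘ g = θ_μ` and `g ∘ f = θ_λ`. -/
theorem stmt_4
    (K A : Type) [Field K] [IsAlgClosed K] [Ring A] [Algebra K A] [FiniteDimensional K A]
    (Lam : Type) [DecidableEq Lam] (L P : Lam → Type)
    [∀ l, AddCommGroup (L l)] [∀ l, Module A (L l)] [∀ l, Module K (L l)]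
    [∀ l, IsScalarTower K A (L l)] [∀ l, FiniteDimensional K (L l)]
    [∀ l, AddCommGroup (P l)] [∀ l, Module A (P l)] [∀ l, Module K (P l)]
    [∀ l, IsScalarTower K A (P l)] [∀ l, SMulCommClass A K (P l)]
    [∀ l, FiniteDimensional K (P l)]
    (hsimple : ∀ l, IsSimpleModule A (L l))
    (hdistinct : ∀ l m, Nonempty (L l ≃ₗ[A] L m) → l = m)
    (hproj : ∀ l, Module.Projective A (P l))
    (hcover : ∀ l, ∃ π : P l →ₗ[A] L l, Function.Surjective π ∧ LinearMap.ker π = Rad A (P l))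
    -- λ' = λ on Λ₀: soc(P^λ) ≅ L^λ for λ ∈ Λ₀
    (hsoc : ∀ l, Module.Injective A (P l) → Nonempty (↥(Socle A (P l)) ≃ₗ[A] L l))
    -- the fixed maps θ_λ : P^λ → P^λ with image soc(P^λ)
    (θ : ∀ s : {l : Lam // Module.Injective A (P l)}, P s.1 →ₗ[A] P s.1)
    (hθ : ∀ s, LinearMap.range (θ s) = Socle A (P s.1))
    -- a symmetrizing form τ on B with τ(θ_λ) = 1 for all λ ∈ Λ₀
    (τ : Module.End A (DirectSum {l : Lam // Module.Injective A (P l)} (fun s => P s.1)) →ₗ[K] K)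
    (hsymm : ∀ x y, τ (x * y) = τ (y * x))
    (hnd : ∀ x, x ≠ 0 → ∃ y, τ (x * y) ≠ 0)
    (hτθ : ∀ s, τ (emb A {l : Lam // Module.Injective A (P l)} (fun s => P s.1) s s (θ s)) = 1)
    (s t : {l : Lam // Module.Injective A (P l)})
    (f : P s.1 →ₗ[A] P t.1) (hf : f ≠ 0) :
    ∃ g : P t.1 →ₗ[A] P s.1, f.comp g = θ t ∧ g.comp f = θ s :=
  stmt_4_general K A Lam L P hsimple hcover hsoc θ hθ τ hsymm hnd hτθ s t f hf
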